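/- For any state formula φ in the syntactic obligation fragment such that λ(φ) = * (i.e., φ is a Boolean combination of atomic propositions possibly with X operators, containing no other temporal operators), the state φ belongs to a trivial SCC of the automaton D_ι; that is, φ cannot lie on any cycle of the transition relation tr. -/

import Mathlib

/-- LTL formulas over atomic propositions `P`. -/
inductive LTL (P : Type) : Type
  | tt : LTL P
  | ff : LTL P
  | atom : P → LTL P
  | not : LTL P → LTL P
  | and : LTL P → LTL P → LTL P
  | or : LTL P → LTL P → LTL P
  | imp : LTL P → LTL P → LTL P
  | iff : LTL P → LTL P → LTL P
  | xor : LTL P → LTL P → LTL P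
  | next : LTL P → LTL P
  | until_ : LTL P → LTL P → LTL P
  | wuntil : LTL P → LTL P → LTL P
  | muntil : LTL P → LTL P → LTL P
  | release : LTL P → LTL P → LTL P
  | ev : LTL P → LTL P
  | always : LTL P → LTL P

namespace LTL

variable {P : Type}

/-- Negation with constant folding. -/
def mkNot : LTL P → LTL P
  | .tt => .ff
  | .ff => .tt
  | φ => .not φ

/-- Conjunction with constant folding. -/
def mkAnd : LTL P → LTL P → LTL P
  | .tt, β => β
  | .ff, _ => .ff
  | α, .tt => α
  | _, .ff => .ff
  | α, β => .and α β

/-- Disjunction with constant folding. -/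
def mkOr : LTL P → LTL P → LTL P
  | .tt, _ => .tt
  | .ff, β => β
  | _, .tt => .tt
  | α, .ff => α
  | α, β => .or α β

/-- Implication with constant folding. -/
def mkImp : LTL P → LTL P → LTL P
  | .ff, _ => .tt
  | .tt, β => β
  | _, .tt => .tt
  | α, .ff => mkNot α
  | α, β => .imp α β

/-- Equivalence with constant folding. -/
def mkIff : LTL P → LTL P → LTL P
  | .tt, β => β
  | .ff, β => mkNot β
  | α, .tt => α
  | α, .ff => mkNot α
  | α, β => .iff α β

/-- Exclusive or with constant folding. -/
def mkXor : LTL P → LTL P → LTL P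
  | .tt, β => mkNot β
  | .ff, β => β
  | α, .tt => mkNot α
  | α, .ff => α
  | α, β => .xor α β

/-- The syntactic successor (local unfolding) of a formula under an
assignment `v` of the atomic propositions. -/
def succ (v : P → Bool) : LTL P → LTL P
  | .tt => .tt
  | .ff => .ff
  | .atom p => if v p then .tt else .ff
  | .not φ => mkNot (succ v φ)
  | .and α β => mkAnd (succ v α) (succ v β)
  | .or α β => mkOr (succ v α) (succ v β)
  | .imp α β => mkImp (succ v α) (succ v β)
  | .iff α β => mkIff (succ v α) (succ v β)
  | .xor α β => mkXor (succ v α) (succ v β)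
  | .next φ => φ
  | .until_ α β => mkOr (succ v β) (mkAnd (succ v α) (.until_ α β))
  | .wuntil α β => mkOr (succ v β) (mkAnd (succ v α) (.wuntil α β))
  | .muntil α β => mkAnd (succ v β) (mkOr (succ v α) (.muntil α β))
  | .release α β => mkAnd (succ v β) (mkOr (succ v α) (.release α β))
  | .ev φ => mkOr (succ v φ) (.ev φ)
  | .always φ => mkAnd (succ v φ) (.always φ)

/-- Boolean evaluation of a formula where every maximal temporal subformula
(and every atomic proposition) is treated as an opaque Boolean variable,
interpreted by `ν`. -/
def evalB (ν : LTL P → Prop) : LTL P → Prop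
  | .tt => True
  | .ff => False
  | .not φ => ¬ evalB ν φ
  | .and α β => evalB ν α ∧ evalB ν β
  | .or α β => evalB ν α ∨ evalB ν β
  | .imp α β => evalB ν α → evalB ν β
  | .iff α β => evalB ν α ↔ evalB ν β
  | .xor α β => ¬ (evalB ν α ↔ evalB ν β)
  | φ => ν φ

/-- Propositional equivalence: the Boolean abstractions (with maximal
temporal subformulas replaced by variables) are logically equivalent. -/
def PropEquiv (α β : LTL P) : Prop := ∀ ν : LTL P → Prop, evalB ν α ↔ evalB ν β

/-! Three-valued acceptance values `some true = ⊤`, `some false = ⊥`,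
`none = *` (wildcard), with the wildcard-absorption tables of the paper. -/

def obNot : Option Bool → Option Bool
  | none => none
  | some b => some (!b)

def obAnd : Option Bool → Option Bool → Option Bool
  | some a, some b => some (a && b)
  | some a, none => some a
  | none, some b => some b
  | none, none => none

def obOr : Option Bool → Option Bool → Option Bool
  | some a, some b => some (a || b)
  | some a, none => some a
  | none, some b => some b
  | none, none => none

def obXor : Option Bool → Option Bool → Option Bool
  | some a, some b => some (a != b)
  | some _, none => some true
  | none, some _ => some true
  | none, none => none

def obIff : Option Bool → Option Bool → Option Bool
  | some a, some b => some (a == b)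
  | some _, none => some true
  | none, some _ => some true
  | none, none => none

def obImp : Option Bool → Option Bool → Option Bool
  | some a, some b => some (!a || b)
  | some true, none => some false
  | some false, none => some true
  | none, some b => some b
  | none, none => none

/-- The acceptance function λ : strong operators (F, U, M) are rejecting (⊥),
weak operators (G, W, R) are accepting (⊤), atoms are wildcards (*),
Boolean connectives are combined with wildcard absorption. -/
def lam : LTL P → Option Bool
  | .tt => some true
  | .ff => some false
  | .atom _ => none
  | .not φ => obNot (lam φ)
  | .and α β => obAnd (lam α) (lam β)
  | .or α β => obOr (lam α) (lam β)
  | .imp α β => obImp (lam α) (lam β)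
  | .iff α β => obIff (lam α) (lam β)
  | .xor α β => obXor (lam α) (lam β)
  | .next φ => lam φ
  | .until_ _ _ => some false
  | .muntil _ _ => some false
  | .ev _ => some false
  | .wuntil _ _ => some true
  | .release _ _ => some true
  | .always _ => some true

def IsConst : LTL P → Prop
  | .tt => True
  | .ff => True
  | _ => False

/-- `tt` and `ff` never occur as proper subformulas. -/
def NoConst : LTL P → Prop
  | .not φ => ¬ IsConst φ ∧ NoConst φ
  | .and α β => (¬ IsConst α ∧ NoConst α) ∧ (¬ IsConst β ∧ NoConst β)
  | .or α β => (¬ IsConst α ∧ NoConst α) ∧ (¬ IsConst β ∧ NoConst β)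
  | .imp α β => (¬ IsConst α ∧ NoConst α) ∧ (¬ IsConst β ∧ NoConst β)
  | .iff α β => (¬ IsConst α ∧ NoConst α) ∧ (¬ IsConst β ∧ NoConst β)
  | .xor α β => (¬ IsConst α ∧ NoConst α) ∧ (¬ IsConst β ∧ NoConst β)
  | .next φ => ¬ IsConst φ ∧ NoConst φ
  | .until_ α β => (¬ IsConst α ∧ NoConst α) ∧ (¬ IsConst β ∧ NoConst β)
  | .wuntil α β => (¬ IsConst α ∧ NoConst α) ∧ (¬ IsConst β ∧ NoConst β)
  | .muntil α β => (¬ IsConst α ∧ NoConst α) ∧ (¬ IsConst β ∧ NoConst β)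
  | .release α β => (¬ IsConst α ∧ NoConst α) ∧ (¬ IsConst β ∧ NoConst β)
  | .ev φ => ¬ IsConst φ ∧ NoConst φ
  | .always φ => ¬ IsConst φ ∧ NoConst φ
  | _ => True

/-- The "bottom" class `φ_B`: Boolean combinations of atomic propositions,
constants, possibly with `X`. -/
inductive IsB : LTL P → Prop
  | tt : IsB .tt
  | ff : IsB .ff
  | atom (p : P) : IsB (.atom p)
  | not {φ} : IsB φ → IsB (.not φ)
  | and {α β} : IsB α → IsB β → IsB (.and α β)
  | or {α β} : IsB α → IsB β → IsB (.or α β)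
  | imp {α β} : IsB α → IsB β → IsB (.imp α β)
  | iff {α β} : IsB α → IsB β → IsB (.iff α β)
  | xor {α β} : IsB α → IsB β → IsB (.xor α β)
  | next {φ} : IsB φ → IsB (.next φ)

mutual
/-- Syntactic guarantee formulas `φ_G`. -/
inductive IsG : LTL P → Prop
  | ofB {φ} : IsB φ → IsG φ
  | notS {φ} : IsS φ → IsG (.not φ)
  | and {α β} : IsG α → IsG β → IsG (.and α β)
  | or {α β} : IsG α → IsG β → IsG (.or α β)
  | impS {α β} : IsS α → IsG β → IsG (.imp α β)
  | next {φ} : IsG φ → IsG (.next φ)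
  | ev {φ} : IsG φ → IsG (.ev φ)
  | until_ {α β} : IsG α → IsG β → IsG (.until_ α β)
  | muntil {α β} : IsG α → IsG β → IsG (.muntil α β)

/-- Syntactic safety formulas `φ_S`. -/
inductive IsS : LTL P → Prop
  | ofB {φ} : IsB φ → IsS φ
  | notG {φ} : IsG φ → IsS (.not φ)
  | and {α β} : IsS α → IsS β → IsS (.and α β)
  | or {α β} : IsS α → IsS β → IsS (.or α β)
  | impG {α β} : IsG α → IsS β → IsS (.imp α β)
  | next {φ} : IsS φ → IsS (.next φ)
  | always {φ} : IsS φ → IsS (.always φ)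
  | release {α β} : IsS α → IsS β → IsS (.release α β)
  | wuntil {α β} : IsS α → IsS β → IsS (.wuntil α β)
end

/-- Syntactic obligation formulas `φ_O`. -/
inductive IsO : LTL P → Prop
  | ofG {φ} : IsG φ → IsO φ
  | ofS {φ} : IsS φ → IsO φ
  | not {φ} : IsO φ → IsO (.not φ)
  | and {α β} : IsO α → IsO β → IsO (.and α β)
  | or {α β} : IsO α → IsO β → IsO (.or α β)
  | imp {α β} : IsO α → IsO β → IsO (.imp α β)
  | iff {α β} : IsO α → IsO β → IsO (.iff α β)
  | xor {α β} : IsO α → IsO β → IsO (.xor α β)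
  | next {φ} : IsO φ → IsO (.next φ)
  | untilG {α β} : IsO α → IsG β → IsO (.until_ α β)
  | releaseS {α β} : IsO α → IsS β → IsO (.release α β)
  | wuntilO {α β} : IsS α → IsO β → IsO (.wuntil α β)
  | muntilO {α β} : IsG α → IsO β → IsO (.muntil α β)

/-- Raw successor relation (no quotienting). -/
def StepRaw (α β : LTL P) : Prop := ∃ v : P → Bool, succ v α = β

/-- Successor relation of the construction: the raw successor is replaced by
the representative `rep` of its propositional-equivalence class. -/
def StepRep (rep : LTL P → LTL P) (α β : LTL P) : Prop :=
  ∃ v : P → Bool, rep (succ v α) = β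

/-- Hypotheses making `rep` a legitimate choice of representatives of
propositional-equivalence classes for the automaton `D_ι`: `rep` picks a
propositionally equivalent formula, constantly on each class, the constants
are canonical, and every state of `D_ι` is (except for `ι` and the constants)
a formula actually produced by the unfolding `succ` from `ι`. -/
def GoodRep (rep : LTL P → LTL P) (ι : LTL P) : Prop :=
  (∀ α, PropEquiv (rep α) α) ∧
  (∀ α β, PropEquiv α β → rep α = rep β) ∧
  (rep .tt = .tt) ∧ (rep .ff = .ff) ∧
  (∀ φ, Relation.ReflTransGen (StepRep rep) ι φ →
      φ = ι ∨ φ = .tt ∨ φ = .ff ∨ Relation.ReflTransGen StepRaw ι φ)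

/-- Shift of an infinite word. -/
def shiftw (w : ℕ → (P → Prop)) (k : ℕ) : ℕ → (P → Prop) := fun n => w (n + k)

/-- Standard LTL semantics over infinite words. -/
def Sat : (ℕ → (P → Prop)) → LTL P → Prop
  | _, .tt => True
  | _, .ff => False
  | w, .atom p => w 0 p
  | w, .not φ => ¬ Sat w φ
  | w, .and α β => Sat w α ∧ Sat w β
  | w, .or α β => Sat w α ∨ Sat w β
  | w, .imp α β => Sat w α → Sat w β
  | w, .iff α β => Sat w α ↔ Sat w β
  | w, .xor α β => ¬ (Sat w α ↔ Sat w β)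
  | w, .next φ => Sat (shiftw w 1) φ
  | w, .until_ α β => ∃ i, Sat (shiftw w i) β ∧ ∀ j < i, Sat (shiftw w j) α
  | w, .wuntil α β =>
      (∃ i, Sat (shiftw w i) β ∧ ∀ j < i, Sat (shiftw w j) α) ∨ ∀ i, Sat (shiftw w i) α
  | w, .muntil α β =>
      ∃ i, (Sat (shiftw w i) α ∧ Sat (shiftw w i) β) ∧ ∀ j < i, Sat (shiftw w j) β
  | w, .release α β => ∀ i, Sat (shiftw w i) β ∨ ∃ j < i, Sat (shiftw w j) α
  | w, .ev φ => ∃ i, Sat (shiftw w i) φ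
  | w, .always φ => ∀ i, Sat (shiftw w i) φ

/-- X-nesting depth. -/
def xdepth : LTL P → ℕ
  | .not φ => xdepth φ
  | .and α β => max (xdepth α) (xdepth β)
  | .or α β => max (xdepth α) (xdepth β)
  | .imp α β => max (xdepth α) (xdepth β)
  | .iff α β => max (xdepth α) (xdepth β)
  | .xor α β => max (xdepth α) (xdepth β)
  | .next φ => xdepth φ + 1
  | _ => 0

/-- Size of a formula. -/
def size : LTL P → ℕ
  | .tt => 1
  | .ff => 1
  | .atom _ => 1
  | .not φ => size φ + 1
  | .and α β => size α + size β + 1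
  | .or α β => size α + size β + 1
  | .imp α β => size α + size β + 1
  | .iff α β => size α + size β + 1
  | .xor α β => size α + size β + 1
  | .next φ => size φ + 1
  | .until_ α β => size α + size β + 1
  | .wuntil α β => size α + size β + 1
  | .muntil α β => size α + size β + 1
  | .release α β => size α + size β + 1
  | .ev φ => size φ + 1
  | .always φ => size φ + 1

/-- Iterated application of the syntactic successor. -/
def iterSucc (vs : ℕ → P → Bool) (φ : LTL P) : ℕ → LTL P
  | 0 => φ
  | n + 1 => succ (vs n) (iterSucc vs φ n)

/-- The run of the automaton `D_ι` (with representative function `rep`) on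
the infinite word `w`. -/
def runRep (rep : LTL P → LTL P) (ι : LTL P) (w : ℕ → P → Bool) : ℕ → LTL P
  | 0 => ι
  | n + 1 => rep (succ (w n) (runRep rep ι w n))

end LTL

/-!
A formula with `λ = *` is a Boolean combination of atoms under at most `d` nested `X`s, so
after `d + 1` unfoldings its Boolean value no longer depends on the leaves: it is
propositionally equivalent to `true` or `false`. Unfolding respects propositional
equivalence, so a cycle through such a state can be pumped to length `d + 1`, making the
state itself equivalent to a constant; being a representative, it is then the constant.
-/

namespace LTL

variable {P : Type}

def succs (L : List (P → Bool)) (φ : LTL P) : LTL P :=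
  L.foldl (fun ψ v => succ v ψ) φ

@[simp] lemma succs_cons (v : P → Bool) (L : List (P → Bool)) (φ : LTL P) :
    succs (v :: L) φ = succs L (succ v φ) := rfl

lemma succs_append (L M : List (P → Bool)) (φ : LTL P) :
    succs (L ++ M) φ = succs M (succs L φ) :=
  List.foldl_append

@[simp] lemma succs_tt (L : List (P → Bool)) : succs L (.tt : LTL P) = .tt := by
  induction L with
  | nil => rfl
  | cons v L ih => exact ih

@[simp] lemma succs_ff (L : List (P → Bool)) : succs L (.ff : LTL P) = .ff := by
  induction L with
  | nil => rfl
  | cons v L ih => exact ih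

section evalB

variable (ν : LTL P → Prop) (α β : LTL P)

lemma evalB_mkNot : evalB ν (mkNot α) ↔ ¬ evalB ν α := by
  cases α <;> simp [mkNot, evalB]

lemma evalB_mkAnd : evalB ν (mkAnd α β) ↔ evalB ν α ∧ evalB ν β := by
  cases α <;> cases β <;> simp [mkAnd, evalB]

lemma evalB_mkOr : evalB ν (mkOr α β) ↔ evalB ν α ∨ evalB ν β := by
  cases α <;> cases β <;> simp [mkOr, evalB]

lemma evalB_mkImp : evalB ν (mkImp α β) ↔ (evalB ν α → evalB ν β) := by
  cases α <;> cases β <;> simp [mkImp, evalB, evalB_mkNot]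

lemma evalB_mkIff : evalB ν (mkIff α β) ↔ (evalB ν α ↔ evalB ν β) := by
  cases α <;> cases β <;> simp [mkIff, evalB, evalB_mkNot]

lemma evalB_mkXor : evalB ν (mkXor α β) ↔ ¬ (evalB ν α ↔ evalB ν β) := by
  cases α <;> cases β <;> simp [mkXor, evalB, evalB_mkNot] <;> tauto

lemma evalB_succ (v : P → Bool) (φ : LTL P) :
    evalB ν (succ v φ) ↔ evalB (fun χ => evalB ν (succ v χ)) φ := by
  induction φ with
  | not φ ih => simp only [succ, evalB_mkNot, evalB, ih]
  | and α β ihα ihβ => simp only [succ, evalB_mkAnd, evalB, ihα, ihβ]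
  | or α β ihα ihβ => simp only [succ, evalB_mkOr, evalB, ihα, ihβ]
  | imp α β ihα ihβ => simp only [succ, evalB_mkImp, evalB, ihα, ihβ]
  | iff α β ihα ihβ => simp only [succ, evalB_mkIff, evalB, ihα, ihβ]
  | xor α β ihα ihβ => simp only [succ, evalB_mkXor, evalB, ihα, ihβ]
  | _ => exact Iff.rfl

/-- Leaves are valued by `ν` itself, so re-valuing them by `evalB ν` changes nothing. -/
lemma evalB_evalB (φ : LTL P) : evalB (evalB ν) φ ↔ evalB ν φ := by
  induction φ with
  | not φ ih => simp only [evalB, ih]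
  | and α β ihα ihβ | or α β ihα ihβ | imp α β ihα ihβ | iff α β ihα ihβ
    | xor α β ihα ihβ => simp only [evalB, ihα, ihβ]
  | _ => exact Iff.rfl

lemma evalB_succs (L : List (P → Bool)) (φ : LTL P) :
    evalB ν (succs L φ) ↔ evalB (fun χ => evalB ν (succs L χ)) φ := by
  induction L generalizing φ with
  | nil => exact (evalB_evalB ν φ).symm
  | cons v L ih =>
    have hleaf : (fun χ => evalB (fun χ' => evalB ν (succs L χ')) (succ v χ)) =
        fun χ => evalB ν (succs (v :: L) χ) :=
      funext fun χ => propext (ih (succ v χ)).symm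
    rw [succs_cons, ih, evalB_succ, hleaf]

end evalB

namespace PropEquiv

lemma symm {α β : LTL P} (h : PropEquiv α β) : PropEquiv β α := fun ν => (h ν).symm

lemma trans {α β γ : LTL P} (h : PropEquiv α β) (h' : PropEquiv β γ) : PropEquiv α γ :=
  fun ν => (h ν).trans (h' ν)

lemma succs {α β : LTL P} (h : PropEquiv α β) (L : List (P → Bool)) :
    PropEquiv (succs L α) (succs L β) := fun ν => by
  rw [evalB_succs, evalB_succs ν L β]
  exact h _

lemma exists_length_ge_of_succs {φ : LTL P} {L : List (P → Bool)}
    (h : PropEquiv φ (LTL.succs L φ)) (hL : L ≠ []) (m : ℕ) :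
    ∃ L' : List (P → Bool), m ≤ L'.length ∧ PropEquiv φ (LTL.succs L' φ) := by
  induction m with
  | zero => exact ⟨L, Nat.zero_le _, h⟩
  | succ m ih =>
    obtain ⟨L', hlen, hL'⟩ := ih
    refine ⟨L' ++ L, ?_, ?_⟩
    · have := List.length_pos_iff.mpr hL
      simp only [List.length_append]
      omega
    · rw [succs_append]
      exact h.trans (hL'.succs L)

lemma tt_or_ff_of_evalB_const {ψ : LTL P} (h : ∀ ν ν', evalB ν ψ ↔ evalB ν' ψ) :
    PropEquiv ψ .tt ∨ PropEquiv ψ .ff := by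
  by_cases hψ : evalB (fun _ => True) ψ
  · exact .inl fun ν => iff_true_intro ((h _ _).mp hψ)
  · exact .inr fun ν => iff_false_intro fun hν => hψ ((h _ _).mp hν)

end PropEquiv

lemma IsB.evalB_succs_const {φ : LTL P} (hφ : IsB φ) {L : List (P → Bool)}
    (hL : xdepth φ < L.length) (ν ν' : LTL P → Prop) :
    evalB ν (succs L φ) ↔ evalB ν' (succs L φ) := by
  rw [evalB_succs, evalB_succs ν' L φ]
  induction hφ generalizing L ν ν' with
  | tt | ff => exact Iff.rfl
  | atom p =>
    obtain ⟨v, L, rfl⟩ := List.exists_cons_of_length_pos hL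
    by_cases hv : v p <;> simp [evalB, succ, hv]
  | next _ ih =>
    obtain ⟨v, L, rfl⟩ := List.exists_cons_of_length_pos (Nat.zero_lt_of_lt hL)
    simp only [xdepth, List.length_cons, Nat.add_lt_add_iff_right] at hL
    simp only [evalB, succs_cons, succ]
    rw [evalB_succs, evalB_succs ν' L]
    exact ih hL ν ν'
  | not _ ih => exact not_congr (ih hL ν ν')
  | and _ _ ihα ihβ | or _ _ ihα ihβ | imp _ _ ihα ihβ | iff _ _ ihα ihβ
    | xor _ _ ihα ihβ =>
    simp only [xdepth, max_lt_iff] at hL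
    simp only [evalB, ihα hL.1 ν ν', ihβ hL.2 ν ν']

lemma isB_of_lam_eq_none {φ : LTL P} (h : lam φ = none) : IsB φ := by
  induction φ with
  | atom p => exact .atom p
  | next φ ih => exact .next (ih h)
  | not φ ih =>
    rcases hφ : lam φ with _ | _ <;> simp only [lam, hφ, obNot, reduceCtorEq] at h
    exact .not (ih hφ)
  | and α β ihα ihβ | or α β ihα ihβ | imp α β ihα ihβ | iff α β ihα ihβ
    | xor α β ihα ihβ =>
    rcases hα : lam α with _ | ⟨_ | _⟩ <;> rcases hβ : lam β with _ | ⟨_ | _⟩ <;>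
      simp [lam, hα, hβ, obAnd, obOr, obImp, obIff, obXor] at h
    constructor
    exacts [ihα hα, ihβ hβ]
  | _ => simp [lam] at h

lemma exists_propEquiv_succs_of_transGen {rep : LTL P → LTL P}
    (hrep : ∀ α, PropEquiv (rep α) α) {α β : LTL P}
    (h : Relation.TransGen (StepRep rep) α β) :
    ∃ L ≠ [], PropEquiv β (succs L α) := by
  induction h with
  | single hstep =>
    obtain ⟨v, rfl⟩ := hstep
    exact ⟨[v], List.cons_ne_nil _ _, hrep _⟩
  | tail _ hstep ih =>
    obtain ⟨v, rfl⟩ := hstep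
    obtain ⟨L, -, hL⟩ := ih
    refine ⟨L ++ [v], by simp, (hrep _).trans ?_⟩
    rw [succs_append]
    exact hL.succs [v]

lemma GoodRep.eq_of_propEquiv {rep : LTL P → LTL P} {ι : LTL P} (hrep : GoodRep rep ι)
    {α γ : LTL P} (h : PropEquiv (rep α) γ) : rep α = rep γ :=
  hrep.2.1 _ _ ((hrep.1 α).symm.trans h)

end LTL

/-- a state `φ` of `D_ι` with `λ(φ) = *` (a Boolean combination of
atoms possibly with `X`, no other temporal operator) cannot lie on any cycle of
the transition relation `tr`, i.e. it belongs to a trivial SCC of `D_ι`. -/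
theorem stmt0 {P : Type} (rep : LTL P → LTL P) (ι : LTL P)
    (hrep : LTL.GoodRep rep ι) (hι : LTL.IsO ι) (hnc : LTL.NoConst ι)
    (φ : LTL P) (hstate : Relation.ReflTransGen (LTL.StepRep rep) ι φ)
    (hstar : LTL.lam φ = none) :
    ¬ Relation.TransGen (LTL.StepRep rep) φ φ := by
  intro hcyc
  obtain ⟨L, hL, hφL⟩ := LTL.exists_propEquiv_succs_of_transGen hrep.1 hcyc
  obtain ⟨L', hlen, hφL'⟩ := hφL.exists_length_ge_of_succs hL (LTL.xdepth φ + 1)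
  have hconst := LTL.PropEquiv.tt_or_ff_of_evalB_const
    ((LTL.isB_of_lam_eq_none hstar).evalB_succs_const (L := L') (by omega))
  obtain ⟨χ, -, v, rfl⟩ := Relation.TransGen.tail'_iff.mp hcyc
  rcases hconst with hc | hc <;> rw [hrep.eq_of_propEquiv (hφL'.trans hc)] at hstar <;>
    simp [LTL.lam, hrep.2.2.1, hrep.2.2.2.1] at hstar
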